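/- For all s ∈ S and all d_1, d_2 with d_0 ≥ d_1 ≥ d_2 ≥ 0: if there exists a path from (s, d_2) to t, then there exists a path from (s, d_1) to t, and the minimum cost of a path from (s, d_1) to t is at most the minimum cost of a path from (s, d_2) to t. Consequently, a node (s, d_2) whose best known arrival cost exceeds that of (s, d_1) with d_1 > d_2 is dominated: no source-to-t path through (s, d_2) is strictly cheaper than the best source-to-t path through (s, d_1). -/

import Mathlib

noncomputable section

/-- Sum of `w` over consecutive pairs of a list. -/
def pathCost {X : Type*} (w : X → X → ℝ) : List X → ℝ
  | [] => 0
  | [_] => 0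
  | a :: b :: rest => w a b + pathCost w (b :: rest)

/-- `p` is a path from `s` to `t` in the graph with edge set `E`. -/
def IsPathFrom {V : Type*} (E : Set (V × V)) (s t : V) (p : List V) : Prop :=
  p.head? = some s ∧ p.getLast? = some t ∧ p.Chain' (fun a b => (a, b) ∈ E)

/-!
Raising the remaining demand at a state from `d2` to `d1` can be simulated edge by edge: an
edge from `(s, d2)` to `(s', e)` is matched by one from `(s, d1)` to `(s', e + (d1 - d2))` of
no greater weight, so the surplus `d1 - d2` is carried along unchanged (it stays within `d0`
because demand never increases along an edge), and once the sink is reached the rest of the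
path is copied. Every path from `(s, d2)` to the sink is thereby shadowed by a path from
`(s, d1)` that costs no more, which gives both claims.
-/

section Paths

variable {V : Type*} {E : Set (V × V)} {a b t : V} {p : List V}

theorem isPathFrom_singleton (E : Set (V × V)) (t : V) : IsPathFrom E t t [t] :=
  ⟨rfl, rfl, List.isChain_singleton t⟩

theorem IsPathFrom.cons (hab : (a, b) ∈ E) (hp : IsPathFrom E b t p) :
    IsPathFrom E a t (a :: p) := by
  obtain ⟨hhead, hlast, hchain⟩ := hp
  obtain ⟨p, rfl⟩ := List.head?_eq_some_iff.1 hhead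
  exact ⟨rfl, by rwa [List.getLast?_cons_cons], List.isChain_cons_cons.2 ⟨hab, hchain⟩⟩

theorem isPathFrom_cons_iff :
    IsPathFrom E a t (b :: p) ↔
      b = a ∧ (p = [] ∧ a = t ∨ ∃ c, (a, c) ∈ E ∧ IsPathFrom E c t p) := by
  constructor
  · rintro ⟨hhead, hlast, hchain⟩
    obtain rfl : b = a := Option.some_injective _ hhead
    refine ⟨rfl, ?_⟩
    cases p with
    | nil => exact .inl ⟨rfl, Option.some_injective _ hlast⟩
    | cons c p =>
      obtain ⟨hbc, hchain⟩ := List.isChain_cons_cons.1 hchain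
      exact .inr ⟨c, hbc, rfl, by rwa [List.getLast?_cons_cons] at hlast, hchain⟩
  · rintro ⟨rfl, ⟨rfl, rfl⟩ | ⟨c, hbc, hp⟩⟩
    exacts [isPathFrom_singleton E b, hp.cons hbc]

theorem IsPathFrom.pathCost_cons (w : V → V → ℝ) (hp : IsPathFrom E b t p) :
    pathCost w (a :: p) = w a b + pathCost w p := by
  obtain ⟨p, rfl⟩ := List.head?_eq_some_iff.1 hp.1
  rfl

variable {w : V → V → ℝ}

def IsCostSimulation (E : Set (V × V)) (w : V → V → ℝ) (R : V → V → Prop) : Prop :=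
  ∀ ⦃u₁ u₂ v₂⦄, R u₁ u₂ → (u₂, v₂) ∈ E → ∃ v₁, (u₁, v₁) ∈ E ∧ w u₁ v₁ ≤ w u₂ v₂ ∧ R v₁ v₂

theorem IsPathFrom.exists_pathCost_le_of_simulation {R : V → V → Prop}
    (hR : IsCostSimulation E w R)
    (htarget : ∀ u, R u t → u = t) {u₁ u₂ : V} (hu : R u₁ u₂) (hp : IsPathFrom E u₂ t p) :
    ∃ q, IsPathFrom E u₁ t q ∧ pathCost w q ≤ pathCost w p := by
  induction p generalizing u₁ u₂ with
  | nil => simp [IsPathFrom] at hp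
  | cons a p ih =>
    obtain ⟨rfl, ⟨rfl, rfl⟩ | ⟨v₂, hedge, hp⟩⟩ := isPathFrom_cons_iff.1 hp
    · obtain rfl := htarget u₁ hu
      exact ⟨_, isPathFrom_singleton E _, le_rfl⟩
    · obtain ⟨v₁, hedge₁, hw, hv⟩ := hR hu hedge
      obtain ⟨q, hq, hcost⟩ := ih hv hp
      refine ⟨u₁ :: q, hq.cons hedge₁, ?_⟩
      rw [hq.pathCost_cons, hp.pathCost_cons]
      exact add_le_add hw hcost

theorem sInf_pathCost_le_sInf_pathCost {u₁ u₂ : V}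
    (h : ∀ p, IsPathFrom E u₂ t p → ∃ q, IsPathFrom E u₁ t q ∧ pathCost w q ≤ pathCost w p) :
    sInf {r : EReal | ∃ p, IsPathFrom E u₁ t p ∧ r = (pathCost w p : EReal)} ≤
      sInf {r : EReal | ∃ p, IsPathFrom E u₂ t p ∧ r = (pathCost w p : EReal)} := by
  refine le_sInf ?_
  rintro _ ⟨p, hp, rfl⟩
  obtain ⟨q, hq, hcost⟩ := h p hp
  exact sInf_le_of_le ⟨q, hq, rfl⟩ (EReal.coe_le_coe_iff.2 hcost)

end Paths

inductive CapacityDominates {σ : Type*} (d0 : ℕ) : (σ × ℕ) ⊕ Unit → (σ × ℕ) ⊕ Unit → Prop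
  | refl (u : (σ × ℕ) ⊕ Unit) : CapacityDominates d0 u u
  | state {s : σ} {d1 d2 : ℕ} : d2 ≤ d1 → d1 ≤ d0 →
      CapacityDominates d0 (Sum.inl (s, d1)) (Sum.inl (s, d2))

theorem CapacityDominates.isCostSimulation {σ : Type*} {d0 : ℕ}
    {E : Set (((σ × ℕ) ⊕ Unit) × ((σ × ℕ) ⊕ Unit))}
    {w : ((σ × ℕ) ⊕ Unit) → ((σ × ℕ) ⊕ Unit) → ℝ}
    (hmono : ∀ (s s' : σ) (d e : ℕ),
      (Sum.inl (s, d), Sum.inl (s', e)) ∈ E → e ≤ d)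
    (hhom : ∀ (s s' : σ) (d1 d2 e : ℕ), e ≤ d2 → d2 ≤ d1 → d1 ≤ d0 →
      (Sum.inl (s, d2), Sum.inl (s', e)) ∈ E →
      (Sum.inl (s, d1), Sum.inl (s', e + (d1 - d2))) ∈ E ∧
        w (Sum.inl (s, d1)) (Sum.inl (s', e + (d1 - d2))) ≤
          w (Sum.inl (s, d2)) (Sum.inl (s', e)))
    (hhomt : ∀ (s : σ) (d1 d2 : ℕ), d2 ≤ d1 → d1 ≤ d0 →
      (Sum.inl (s, d2), Sum.inr ()) ∈ E →
      (Sum.inl (s, d1), Sum.inr ()) ∈ E ∧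
        w (Sum.inl (s, d1)) (Sum.inr ()) ≤ w (Sum.inl (s, d2)) (Sum.inr ())) :
    IsCostSimulation E w (CapacityDominates d0) := by
  rintro _ _ (⟨s', e⟩ | ⟨⟩) (_ | @⟨s, d1, d2, h21, h10⟩) hedge
  · exact ⟨_, hedge, le_rfl, .refl _⟩
  · have he : e ≤ d2 := hmono s s' d2 e hedge
    obtain ⟨hedge₁, hw⟩ := hhom s s' d1 d2 e he h21 h10 hedge
    exact ⟨_, hedge₁, hw, .state (by omega) (by omega)⟩
  · exact ⟨_, hedge, le_rfl, .refl _⟩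
  · obtain ⟨hedge₁, hw⟩ := hhomt s d1 d2 h21 h10 hedge
    exact ⟨_, hedge₁, hw, .refl _⟩

theorem CapacityDominates.eq_of_right_eq_inr {σ : Type*} {d0 : ℕ} {u : (σ × ℕ) ⊕ Unit}
    (h : CapacityDominates d0 u (Sum.inr ())) : u = Sum.inr () := by
  cases h
  rfl

theorem dominance_of_higher_remaining_capacity_general {σ : Type*} (d0 : ℕ)
    (E : Set (((σ × ℕ) ⊕ Unit) × ((σ × ℕ) ⊕ Unit)))
    (w : ((σ × ℕ) ⊕ Unit) → ((σ × ℕ) ⊕ Unit) → ℝ)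
    (hmono : ∀ (s s' : σ) (d e : ℕ),
      (Sum.inl (s, d), Sum.inl (s', e)) ∈ E → e ≤ d)
    (hhom : ∀ (s s' : σ) (d1 d2 e : ℕ), e ≤ d2 → d2 ≤ d1 → d1 ≤ d0 →
      (Sum.inl (s, d2), Sum.inl (s', e)) ∈ E →
      (Sum.inl (s, d1), Sum.inl (s', e + (d1 - d2))) ∈ E ∧
        w (Sum.inl (s, d1)) (Sum.inl (s', e + (d1 - d2))) ≤
          w (Sum.inl (s, d2)) (Sum.inl (s', e)))
    (hhomt : ∀ (s : σ) (d1 d2 : ℕ), d2 ≤ d1 → d1 ≤ d0 →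
      (Sum.inl (s, d2), Sum.inr ()) ∈ E →
      (Sum.inl (s, d1), Sum.inr ()) ∈ E ∧
        w (Sum.inl (s, d1)) (Sum.inr ()) ≤ w (Sum.inl (s, d2)) (Sum.inr ())) :
    ∀ (s : σ) (d1 d2 : ℕ), d2 ≤ d1 → d1 ≤ d0 →
      ((∃ p, IsPathFrom E (Sum.inl (s, d2)) (Sum.inr ()) p) →
        ∃ p, IsPathFrom E (Sum.inl (s, d1)) (Sum.inr ()) p) ∧
      sInf {r : EReal | ∃ p, IsPathFrom E (Sum.inl (s, d1)) (Sum.inr ()) p ∧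
          r = (pathCost w p : EReal)} ≤
        sInf {r : EReal | ∃ p, IsPathFrom E (Sum.inl (s, d2)) (Sum.inr ()) p ∧
          r = (pathCost w p : EReal)} := by
  intro s d1 d2 h21 h10
  have hlift : ∀ p, IsPathFrom E (Sum.inl (s, d2)) (Sum.inr ()) p →
      ∃ q, IsPathFrom E (Sum.inl (s, d1)) (Sum.inr ()) q ∧ pathCost w q ≤ pathCost w p :=
    fun _ ↦ IsPathFrom.exists_pathCost_le_of_simulation
      (CapacityDominates.isCostSimulation hmono hhom hhomt)
      (fun _ ↦ CapacityDominates.eq_of_right_eq_inr) (.state h21 h10)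
  exact ⟨fun ⟨p, hp⟩ ↦ (hlift p hp).imp fun _ ↦ And.left, sInf_pathCost_le_sInf_pathCost hlift⟩

/-- Dominance in the pricing graph. Vertices are state–demand pairs `Sum.inl (s, d)` with
`d ≤ d0`, plus the sink `Sum.inr ()`. Edges go from `(s, d)` to `(s′, d − δ)` (demand is
consumed along edges), and the graph is homogeneous in demand: any edge available from
demand level `d₂` is available, with no larger weight, from any level `d₁` with
`d₂ ≤ d₁ ≤ d0` (with the same demand consumption, resp. into the sink). Then whenever
`d₂ ≤ d₁ ≤ d0`: any path from `(s, d₂)` to the sink yields one from `(s, d₁)`, and the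
minimum cost of a path from `(s, d₁)` to the sink is at most that from `(s, d₂)`. -/
theorem dominance_of_higher_remaining_capacity {σ : Type*} [Fintype σ] (d0 : ℕ)
    (E : Set (((σ × ℕ) ⊕ Unit) × ((σ × ℕ) ⊕ Unit)))
    (w : ((σ × ℕ) ⊕ Unit) → ((σ × ℕ) ⊕ Unit) → ℝ)
    (hvert : ∀ e ∈ E, (∀ s d, e.1 = Sum.inl (s, d) → d ≤ d0) ∧
      (∀ s d, e.2 = Sum.inl (s, d) → d ≤ d0))
    (hmono : ∀ (s s' : σ) (d e : ℕ),
      (Sum.inl (s, d), Sum.inl (s', e)) ∈ E → e ≤ d)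
    (hhom : ∀ (s s' : σ) (d1 d2 e : ℕ), e ≤ d2 → d2 ≤ d1 → d1 ≤ d0 →
      (Sum.inl (s, d2), Sum.inl (s', e)) ∈ E →
      (Sum.inl (s, d1), Sum.inl (s', e + (d1 - d2))) ∈ E ∧
        w (Sum.inl (s, d1)) (Sum.inl (s', e + (d1 - d2))) ≤
          w (Sum.inl (s, d2)) (Sum.inl (s', e)))
    (hhomt : ∀ (s : σ) (d1 d2 : ℕ), d2 ≤ d1 → d1 ≤ d0 →
      (Sum.inl (s, d2), Sum.inr ()) ∈ E →
      (Sum.inl (s, d1), Sum.inr ()) ∈ E ∧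
        w (Sum.inl (s, d1)) (Sum.inr ()) ≤ w (Sum.inl (s, d2)) (Sum.inr ())) :
    ∀ (s : σ) (d1 d2 : ℕ), d2 ≤ d1 → d1 ≤ d0 →
      ((∃ p, IsPathFrom E (Sum.inl (s, d2)) (Sum.inr ()) p) →
        ∃ p, IsPathFrom E (Sum.inl (s, d1)) (Sum.inr ()) p) ∧
      sInf {r : EReal | ∃ p, IsPathFrom E (Sum.inl (s, d1)) (Sum.inr ()) p ∧
          r = (pathCost w p : EReal)} ≤
        sInf {r : EReal | ∃ p, IsPathFrom E (Sum.inl (s, d2)) (Sum.inr ()) p ∧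
          r = (pathCost w p : EReal)} :=
  dominance_of_higher_remaining_capacity_general d0 E w hmono hhom hhomt
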